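/- arXiv:2404.04954 — 3 statements merged into one kernel-verified Lean document; each statement's English description precedes it below -/
import Mathlib

section
/- For a Banach lattice E, the set aLwc(E) of almost L-weakly compact operators on E is a norm-closed right ideal in the algebra L(E) of bounded operators: it is a closed subspace, and if T ∈ aLwc(E) and S ∈ L(E) then T∘S ∈ aLwc(E). -/
open Filter Topology

section Defs

/-- A pairwise disjoint sequence in a lattice-ordered group. -/
def DisjSeq {E : Type*} [Lattice E] [AddCommGroup E] (x : ℕ → E) : Prop :=
  ∀ m n : ℕ, m ≠ n → |x m| ⊓ |x n| = 0

/-- The solid hull of a set. -/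
def SolidHull {E : Type*} [NormedAddCommGroup E] [Lattice E] [HasSolidNorm E] [IsOrderedAddMonoid E] (A : Set E) : Set E :=
  {y | ∃ a ∈ A, |y| ≤ |a|}

/-- An L-weakly compact (Lwc) set: bounded, and every disjoint sequence in its
solid hull is norm null. -/
def IsLwcSet {E : Type*} [NormedAddCommGroup E] [Lattice E] [HasSolidNorm E] [IsOrderedAddMonoid E] (A : Set E) : Prop :=
  Bornology.IsBounded A ∧
    ∀ x : ℕ → E, (∀ n, x n ∈ SolidHull A) → DisjSeq x →
      Tendsto (fun n => ‖x n‖) atTop (𝓝 0)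

/-- A relatively weakly compact subset of a normed space. -/
def RelWeaklyCompact {X : Type*} [NormedAddCommGroup X] [NormedSpace ℝ X] (A : Set X) : Prop :=
  IsCompact (closure ((toWeakSpace ℝ X) '' A))

/-- Weak convergence of a sequence in a normed space. -/
def WeakTendsto {X : Type*} [NormedAddCommGroup X] [NormedSpace ℝ X] (x : ℕ → X) (a : X) : Prop :=
  ∀ φ : X →L[ℝ] ℝ, Tendsto (fun n => φ (x n)) atTop (𝓝 (φ a))

/-- A norm-bounded sequence. -/
def BddSeq {X : Type*} [NormedAddCommGroup X] (x : ℕ → X) : Prop :=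
  ∃ M : ℝ, ∀ n, ‖x n‖ ≤ M

/-- Almost L-weakly compact operator: maps relatively weakly compact sets onto Lwc sets. -/
def IsALwc {X F : Type*} [NormedAddCommGroup X] [NormedSpace ℝ X]
    [NormedAddCommGroup F] [Lattice F] [HasSolidNorm F] [IsOrderedAddMonoid F] [NormedSpace ℝ F] (T : X →L[ℝ] F) : Prop :=
  ∀ A : Set X, RelWeaklyCompact A → IsLwcSet (T '' A)

/-- M-weakly compact operator. -/
def IsMwc {E Y : Type*} [NormedAddCommGroup E] [Lattice E] [HasSolidNorm E] [IsOrderedAddMonoid E] [NormedSpace ℝ E]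
    [NormedAddCommGroup Y] [NormedSpace ℝ Y] (T : E →L[ℝ] Y) : Prop :=
  ∀ x : ℕ → E, DisjSeq x → BddSeq x → Tendsto (fun n => ‖T (x n)‖) atTop (𝓝 0)

/-- Almost M-weakly compact operator. -/
def IsAMwc {E Y : Type*} [NormedAddCommGroup E] [Lattice E] [HasSolidNorm E] [IsOrderedAddMonoid E] [NormedSpace ℝ E]
    [NormedAddCommGroup Y] [NormedSpace ℝ Y] (T : E →L[ℝ] Y) : Prop :=
  ∀ (f : ℕ → (Y →L[ℝ] ℝ)) (g : Y →L[ℝ] ℝ), WeakTendsto f g →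
    ∀ x : ℕ → E, DisjSeq x → BddSeq x →
      Tendsto (fun n => f n (T (x n))) atTop (𝓝 0)

/-- Order continuous norm (F = Fᵃ): every disjoint sequence in an order interval
[0, y] is norm null. -/
def HasOCN (F : Type*) [NormedAddCommGroup F] [Lattice F] [HasSolidNorm F] [IsOrderedAddMonoid F] : Prop :=
  ∀ y : F, 0 ≤ y → ∀ x : ℕ → F, (∀ n, x n ∈ Set.Icc (0 : F) y) → DisjSeq x →
    Tendsto (fun n => ‖x n‖) atTop (𝓝 0)

/-- Semi-compact operator. -/
def IsSemiCompact {E F : Type*} [NormedAddCommGroup E] [Lattice E] [HasSolidNorm E] [IsOrderedAddMonoid E] [NormedSpace ℝ E]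
    [NormedAddCommGroup F] [Lattice F] [HasSolidNorm F] [IsOrderedAddMonoid F] [NormedSpace ℝ F] (S : E →L[ℝ] F) : Prop :=
  ∀ ε : ℝ, 0 < ε → ∃ u : F, 0 ≤ u ∧
    ∀ x ∈ Metric.closedBall (0 : E) 1, ∃ w ∈ Set.Icc (-u) u, ‖S x - w‖ ≤ ε

/-- A positive functional on a Banach lattice. -/
def PosFunc {F : Type*} [NormedAddCommGroup F] [Lattice F] [HasSolidNorm F] [IsOrderedAddMonoid F] [NormedSpace ℝ F]
    (f : F →L[ℝ] ℝ) : Prop :=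
  ∀ y : F, 0 ≤ y → 0 ≤ f y

/-- The value of the modulus |f| of a functional at y (meaningful for 0 ≤ y). -/
noncomputable def absDual {F : Type*} [NormedAddCommGroup F] [Lattice F] [HasSolidNorm F] [IsOrderedAddMonoid F] [NormedSpace ℝ F]
    (f : F →L[ℝ] ℝ) (y : F) : ℝ :=
  sSup ((fun z => f z) '' {z : F | |z| ≤ y})

/-- Disjointness of two functionals: (|f| ⊓ |g|)(y) = 0 for all y ≥ 0, via the
Riesz–Kantorovich formula. -/
def DualDisjoint {F : Type*} [NormedAddCommGroup F] [Lattice F] [HasSolidNorm F] [IsOrderedAddMonoid F] [NormedSpace ℝ F]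
    (f g : F →L[ℝ] ℝ) : Prop :=
  ∀ y : F, 0 ≤ y →
    sInf {r : ℝ | ∃ z : F, 0 ≤ z ∧ z ≤ y ∧ r = absDual f z + absDual g (y - z)} = 0

/-- A pairwise disjoint sequence of functionals. -/
def DualDisjSeq {F : Type*} [NormedAddCommGroup F] [Lattice F] [HasSolidNorm F] [IsOrderedAddMonoid F] [NormedSpace ℝ F]
    (f : ℕ → (F →L[ℝ] ℝ)) : Prop :=
  ∀ m n : ℕ, m ≠ n → DualDisjoint (f m) (f n)

/-- A weak* null sequence of functionals. -/
def WeakStarNull {F : Type*} [NormedAddCommGroup F] [NormedSpace ℝ F]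
    (f : ℕ → (F →L[ℝ] ℝ)) : Prop :=
  ∀ y : F, Tendsto (fun n => f n y) atTop (𝓝 0)

/-- Almost limited operator: ‖T* fₙ‖ → 0 for every disjoint weak* null (fₙ) in F*. -/
def IsAlmostLimited {X F : Type*} [NormedAddCommGroup X] [NormedSpace ℝ X]
    [NormedAddCommGroup F] [Lattice F] [HasSolidNorm F] [IsOrderedAddMonoid F] [NormedSpace ℝ F] (T : X →L[ℝ] F) : Prop :=
  ∀ f : ℕ → (F →L[ℝ] ℝ), DualDisjSeq f → WeakStarNull f →
    Tendsto (fun n => ‖(f n).comp T‖) atTop (𝓝 0)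

/-- The canonical order on the dual: f ≤ g iff f y ≤ g y for all y ≥ 0. -/
def DualLE {F : Type*} [NormedAddCommGroup F] [Lattice F] [HasSolidNorm F] [IsOrderedAddMonoid F] [NormedSpace ℝ F]
    (f g : F →L[ℝ] ℝ) : Prop :=
  ∀ y : F, 0 ≤ y → f y ≤ g y

/-- The dual E* is a KB-space: every increasing norm-bounded sequence of positive
functionals is norm convergent. -/
def DualKB (E : Type*) [NormedAddCommGroup E] [Lattice E] [HasSolidNorm E] [IsOrderedAddMonoid E] [NormedSpace ℝ E] : Prop :=
  ∀ f : ℕ → (E →L[ℝ] ℝ), (∀ n, PosFunc (f n)) →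
    (∀ m n : ℕ, m ≤ n → DualLE (f m) (f n)) → (∃ M : ℝ, ∀ n, ‖f n‖ ≤ M) →
      ∃ g : E →L[ℝ] ℝ, Tendsto (fun n => ‖f n - g‖) atTop (𝓝 0)

/-- Positive operator. -/
def PosOp {E F : Type*} [NormedAddCommGroup E] [Lattice E] [HasSolidNorm E] [IsOrderedAddMonoid E] [NormedSpace ℝ E]
    [NormedAddCommGroup F] [Lattice F] [HasSolidNorm F] [IsOrderedAddMonoid F] [NormedSpace ℝ F] (T : E →L[ℝ] F) : Prop :=
  ∀ x : E, 0 ≤ x → 0 ≤ T x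

/-- Order bounded operator: maps order intervals into order intervals. -/
def OrderBoundedOp {E F : Type*} [NormedAddCommGroup E] [Lattice E] [HasSolidNorm E] [IsOrderedAddMonoid E] [NormedSpace ℝ E]
    [NormedAddCommGroup F] [Lattice F] [HasSolidNorm F] [IsOrderedAddMonoid F] [NormedSpace ℝ F] (T : E →L[ℝ] F) : Prop :=
  ∀ a b : E, ∃ c d : F, T '' Set.Icc a b ⊆ Set.Icc c d

/-- Order L-weakly compact operator: maps order bounded sets onto Lwc sets. -/
def IsOLwc {E F : Type*} [NormedAddCommGroup E] [Lattice E] [HasSolidNorm E] [IsOrderedAddMonoid E] [NormedSpace ℝ E]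
    [NormedAddCommGroup F] [Lattice F] [HasSolidNorm F] [IsOrderedAddMonoid F] [NormedSpace ℝ F] (T : E →L[ℝ] F) : Prop :=
  ∀ a b : E, IsLwcSet (T '' Set.Icc a b)

/-- Order M-weakly compact operator. -/
def IsOMwc {E F : Type*} [NormedAddCommGroup E] [Lattice E] [HasSolidNorm E] [IsOrderedAddMonoid E] [NormedSpace ℝ E]
    [NormedAddCommGroup F] [Lattice F] [HasSolidNorm F] [IsOrderedAddMonoid F] [NormedSpace ℝ F] (T : E →L[ℝ] F) : Prop :=
  ∀ f : ℕ → (F →L[ℝ] ℝ),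
    (∃ g h : F →L[ℝ] ℝ, ∀ n, DualLE g (f n) ∧ DualLE (f n) h) →
    ∀ x : ℕ → E, DisjSeq x → BddSeq x →
      Tendsto (fun n => f n (T (x n))) atTop (𝓝 0)

/-- Dunford–Pettis operator. -/
def IsDP {X Y : Type*} [NormedAddCommGroup X] [NormedSpace ℝ X]
    [NormedAddCommGroup Y] [NormedSpace ℝ Y] (T : X →L[ℝ] Y) : Prop :=
  ∀ x : ℕ → X, WeakTendsto x 0 → Tendsto (fun n => ‖T (x n)‖) atTop (𝓝 0)

/-- Weakly sequentially continuous lattice operations. -/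
def WSCLatticeOps (F : Type*) [NormedAddCommGroup F] [Lattice F] [HasSolidNorm F] [IsOrderedAddMonoid F] [NormedSpace ℝ F] : Prop :=
  ∀ x : ℕ → F, WeakTendsto x 0 → WeakTendsto (fun n => |x n|) 0

/-- Limitedly M-weakly compact operator: T xₙ → 0 weakly for each disjoint bounded (xₙ). -/
def IsLMwc {E Y : Type*} [NormedAddCommGroup E] [Lattice E] [HasSolidNorm E] [IsOrderedAddMonoid E] [NormedSpace ℝ E]
    [NormedAddCommGroup Y] [NormedSpace ℝ Y] (T : E →L[ℝ] Y) : Prop :=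
  ∀ x : ℕ → E, DisjSeq x → BddSeq x → WeakTendsto (fun n => T (x n)) 0

end Defs

/-!
By the Riesz decomposition, if `|x| ≤ |a + b|` then `x = y + z` with `|y| ≤ |a|`, `|z| ≤ |b|`
and `|y|, |z| ≤ |x|`, so a disjoint sequence in the solid hull of `A + B` splits into disjoint
sequences in the solid hulls of `A` and of `B`. Hence sums of Lwc sets are Lwc, and a set lying
within every `ε` of some Lwc set is Lwc. Since `(T + S)(A) ⊆ T(A) + S(A)`, and
`T(A) ⊆ T'(A) + ε`-ball whenever `A` is bounded and `T'` is close to `T`, the aLwc operators form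
a closed subspace; they form a right ideal because bounded operators preserve relative weak
compactness.
-/

open Bornology Metric Set
open scoped Pointwise

section LatticeOrderedGroup

variable {E : Type*} [Lattice E] [AddCommGroup E] [IsOrderedAddMonoid E]

theorem exists_add_eq_abs_le_of_abs_le_add {x u v : E} (hu : 0 ≤ u) (hv : 0 ≤ v)
    (hx : |x| ≤ u + v) :
    ∃ y z : E, x = y + z ∧ |y| ≤ u ∧ |z| ≤ v ∧ |y| ≤ |x| ∧ |z| ≤ |x| := by
  -- `y` is `x` truncated to the order interval `[-u, u]`
  set y : E := (x ⊓ u) ⊔ -u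
  have hneg_y : -y = (-x ⊔ -u) ⊓ u := by simp only [y, neg_sup, neg_inf, neg_neg]
  have hz_le : x - y ≤ 0 ⊔ (x - u) := by
    calc x - y ≤ x - x ⊓ u := sub_le_sub_left le_sup_left x
      _ = 0 ⊔ (x - u) := by rw [sub_inf, sub_self]
  have hz_ge : -(x - y) ≤ 0 ⊔ (-x - u) := by
    calc -(x - y) ≤ (x ⊔ -u) - x := by
          rw [neg_sub]; exact sub_le_sub_right (sup_le_sup_right inf_le_left _) x
      _ = 0 ⊔ (-x - u) := by rw [sup_sub, sub_self]; abel_nf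
  have hxu : x - u ≤ v := sub_le_iff_le_add'.2 ((le_abs_self x).trans hx)
  have hnxu : -x - u ≤ v := sub_le_iff_le_add'.2 ((neg_le_abs x).trans hx)
  have hnu : -u ≤ |x| := (neg_nonpos.2 hu).trans (abs_nonneg x)
  refine ⟨y, x - y, (add_sub_cancel y x).symm, ?_, ?_, ?_, ?_⟩
  · exact abs_le'.2 ⟨sup_le inf_le_right ((neg_nonpos.2 hu).trans hu), hneg_y ▸ inf_le_right⟩
  · exact abs_le'.2 ⟨hz_le.trans (sup_le hv hxu), hz_ge.trans (sup_le hv hnxu)⟩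
  · exact abs_le'.2 ⟨sup_le (inf_le_left.trans (le_abs_self x)) hnu,
      hneg_y ▸ inf_le_left.trans (sup_le (neg_le_abs x) hnu)⟩
  · refine abs_le'.2 ⟨hz_le.trans (sup_le (abs_nonneg x) ?_), hz_ge.trans (sup_le (abs_nonneg x) ?_)⟩
    · exact (sub_le_self x hu).trans (le_abs_self x)
    · exact (sub_le_self (-x) hu).trans (neg_le_abs x)

theorem DisjSeq.of_abs_le {x z : ℕ → E} (hx : DisjSeq x) (h : ∀ n, |z n| ≤ |x n|) :
    DisjSeq z := fun m n hmn =>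
  le_antisymm ((inf_le_inf (h m) (h n)).trans_eq (hx m n hmn))
    (le_inf (abs_nonneg _) (abs_nonneg _))

end LatticeOrderedGroup

section LwcSet

variable {E : Type*} [NormedAddCommGroup E] [Lattice E] [HasSolidNorm E] [IsOrderedAddMonoid E]
  {A B : Set E}

theorem solidHull_mono (h : A ⊆ B) : SolidHull A ⊆ SolidHull B := fun _ ⟨a, ha, hxa⟩ =>
  ⟨a, h ha, hxa⟩

theorem norm_le_of_mem_solidHull_closedBall {x : E} {r : ℝ}
    (hx : x ∈ SolidHull (closedBall (0 : E) r)) : ‖x‖ ≤ r := by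
  obtain ⟨a, ha, hxa⟩ := hx
  exact (norm_le_norm_of_abs_le_abs hxa).trans (mem_closedBall_zero_iff.1 ha)

theorem exists_add_eq_of_mem_solidHull_add {x : E} (hx : x ∈ SolidHull (A + B)) :
    ∃ y ∈ SolidHull A, ∃ z ∈ SolidHull B, x = y + z ∧ |y| ≤ |x| ∧ |z| ≤ |x| := by
  obtain ⟨_, ⟨a, ha, b, hb, rfl⟩, hx⟩ := hx
  obtain ⟨y, z, rfl, hya, hzb, hy, hz⟩ :=
    exists_add_eq_abs_le_of_abs_le_add (abs_nonneg a) (abs_nonneg b) (hx.trans (abs_add_le a b))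
  exact ⟨y, ⟨a, ha, hya⟩, z, ⟨b, hb, hzb⟩, rfl, hy, hz⟩

theorem DisjSeq.exists_split_of_mem_solidHull_add {x : ℕ → E} (hx : DisjSeq x)
    (hxAB : ∀ n, x n ∈ SolidHull (A + B)) :
    ∃ y z : ℕ → E, x = y + z ∧ (∀ n, y n ∈ SolidHull A) ∧ DisjSeq y ∧
      (∀ n, z n ∈ SolidHull B) ∧ DisjSeq z := by
  choose y hyA z hzB hxyz hy hz using fun n => exists_add_eq_of_mem_solidHull_add (hxAB n)
  exact ⟨y, z, funext hxyz, hyA, hx.of_abs_le hy, hzB, hx.of_abs_le hz⟩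

theorem IsLwcSet.mono (hB : IsLwcSet B) (h : A ⊆ B) : IsLwcSet A :=
  ⟨hB.1.subset h, fun x hx => hB.2 x fun n => solidHull_mono h (hx n)⟩

theorem IsLwcSet.add (hA : IsLwcSet A) (hB : IsLwcSet B) : IsLwcSet (A + B) := by
  refine ⟨isBounded_add hA.1 hB.1, fun x hxAB hx => ?_⟩
  obtain ⟨y, z, rfl, hyA, hy, hzB, hz⟩ := hx.exists_split_of_mem_solidHull_add hxAB
  have hyz : Tendsto (fun n => ‖y n‖ + ‖z n‖) atTop (𝓝 0) := by
    simpa using (hA.2 y hyA hy).add (hB.2 z hzB hz)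
  exact squeeze_zero (fun n => norm_nonneg _) (fun n => norm_add_le (y n) (z n)) hyz

theorem IsLwcSet.of_forall_subset_add_closedBall
    (h : ∀ ε > 0, ∃ B, IsLwcSet B ∧ A ⊆ B + closedBall (0 : E) ε) : IsLwcSet A := by
  obtain ⟨B₁, hB₁, hAB₁⟩ := h 1 one_pos
  refine ⟨(isBounded_add hB₁.1 isBounded_closedBall).subset hAB₁, fun x hxA hx => ?_⟩
  refine NormedAddGroup.tendsto_nhds_zero.2 fun ε hε => ?_
  obtain ⟨B, hB, hAB⟩ := h (ε / 2) (half_pos hε)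
  obtain ⟨y, z, rfl, hyB, hy, hzε, -⟩ :=
    hx.exists_split_of_mem_solidHull_add fun n => solidHull_mono hAB (hxA n)
  filter_upwards [NormedAddGroup.tendsto_nhds_zero.1 (hB.2 y hyB hy) (ε / 2) (half_pos hε)]
    with n hyn
  rw [norm_norm] at hyn ⊢
  calc ‖y n + z n‖ ≤ ‖y n‖ + ‖z n‖ := norm_add_le _ _
    _ < ε / 2 + ε / 2 := add_lt_add_of_lt_of_le hyn (norm_le_of_mem_solidHull_closedBall (hzε n))
    _ = ε := add_halves ε

end LwcSet

theorem isBounded_of_forall_isBounded_image_dual {𝕜 X : Type*} [RCLike 𝕜] [NormedAddCommGroup X]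
    [NormedSpace 𝕜 X] {A : Set X} (h : ∀ φ : StrongDual 𝕜 X, IsBounded (φ '' A)) :
    IsBounded A := by
  obtain ⟨C, hC⟩ := banach_steinhaus (g := fun a : A => NormedSpace.inclusionInDoubleDual 𝕜 X a)
    fun φ => by
      obtain ⟨C, hC⟩ := (h φ).exists_norm_le
      exact ⟨C, fun a => hC _ (mem_image_of_mem φ a.2)⟩
  refine isBounded_iff_forall_norm_le.2 ⟨C, fun a ha => ?_⟩
  rw [← (NormedSpace.inclusionInDoubleDualLi 𝕜 (E := X)).norm_map a]
  exact hC ⟨a, ha⟩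

section RelWeaklyCompact

variable {X Y : Type*} [NormedAddCommGroup X] [NormedSpace ℝ X] [NormedAddCommGroup Y]
  [NormedSpace ℝ Y] {A : Set X}

theorem RelWeaklyCompact.isBounded (hA : RelWeaklyCompact A) : IsBounded A := by
  refine isBounded_of_forall_isBounded_image_dual (𝕜 := ℝ) fun φ => ?_
  have hφ : Continuous fun w : WeakSpace ℝ X => φ ((toWeakSpace ℝ X).symm w) :=
    WeakBilin.eval_continuous _ φ
  refine (IsCompact.image hA hφ).isBounded.subset ?_
  rintro _ ⟨a, ha, rfl⟩
  exact ⟨toWeakSpace ℝ X a, subset_closure (mem_image_of_mem _ ha), rfl⟩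

theorem RelWeaklyCompact.image (hA : RelWeaklyCompact A) (f : X →L[ℝ] Y) :
    RelWeaklyCompact (f '' A) := by
  have hK := IsCompact.image hA (WeakSpace.map f).continuous
  refine hK.of_isClosed_subset isClosed_closure (closure_minimal ?_ hK.isClosed)
  rintro _ ⟨_, ⟨a, ha, rfl⟩, rfl⟩
  exact ⟨toWeakSpace ℝ X a, subset_closure (mem_image_of_mem _ ha), rfl⟩

end RelWeaklyCompact

section ALwc

variable {X Y F : Type*} [NormedAddCommGroup X] [NormedSpace ℝ X] [NormedAddCommGroup Y]
  [NormedSpace ℝ Y] [NormedAddCommGroup F] [Lattice F] [HasSolidNorm F] [IsOrderedAddMonoid F]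
  [NormedSpace ℝ F] {T S : X →L[ℝ] F}

theorem IsALwc.comp (hT : IsALwc T) (R : Y →L[ℝ] X) : IsALwc (T.comp R) := fun A hA => by
  rw [ContinuousLinearMap.coe_comp, image_comp]
  exact hT _ (hA.image R)

theorem IsALwc.smul (hT : IsALwc T) (c : ℝ) : IsALwc (c • T) := by
  simpa [ContinuousLinearMap.comp_smul] using hT.comp (c • ContinuousLinearMap.id ℝ X)

theorem IsALwc.add (hT : IsALwc T) (hS : IsALwc S) : IsALwc (T + S) := fun A hA =>
  ((hT A hA).add (hS A hA)).mono <| by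
    rintro _ ⟨a, ha, rfl⟩
    exact add_mem_add (mem_image_of_mem T ha) (mem_image_of_mem S ha)

theorem isClosed_setOf_isALwc : IsClosed {T : X →L[ℝ] F | IsALwc T} := by
  refine isClosed_of_closure_subset fun T hT A hA => ?_
  obtain ⟨R, hR, hAR⟩ := hA.isBounded.exists_pos_norm_le
  refine IsLwcSet.of_forall_subset_add_closedBall fun ε hε => ?_
  obtain ⟨T', hT', hTT'⟩ := mem_closure_iff.1 hT (ε / R) (div_pos hε hR)
  refine ⟨T' '' A, hT' A hA, ?_⟩
  rintro _ ⟨a, ha, rfl⟩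
  refine ⟨T' a, mem_image_of_mem T' ha, (T - T') a, ?_, by simp⟩
  rw [mem_closedBall_zero_iff]
  calc ‖(T - T') a‖ ≤ ‖T - T'‖ * ‖a‖ := (T - T').le_opNorm a
    _ ≤ ε / R * R := mul_le_mul (dist_eq_norm T T' ▸ hTT'.le) (hAR a ha) (norm_nonneg a)
        (div_pos hε hR).le
    _ = ε := div_mul_cancel₀ ε hR.ne'

end ALwc

theorem stmt_5_general {E : Type*} [NormedAddCommGroup E] [Lattice E] [HasSolidNorm E] [IsOrderedAddMonoid E] [NormedSpace ℝ E] :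
    IsClosed {T : E →L[ℝ] E | IsALwc T} ∧
    (∀ T S : E →L[ℝ] E, IsALwc T → IsALwc S → IsALwc (T + S)) ∧
    (∀ (c : ℝ) (T : E →L[ℝ] E), IsALwc T → IsALwc (c • T)) ∧
    (∀ T S : E →L[ℝ] E, IsALwc T → IsALwc (T.comp S)) :=
  ⟨isClosed_setOf_isALwc, fun _ _ hT hS => hT.add hS, fun c _ hT => hT.smul c,
    fun _ S hT => hT.comp S⟩

/-- aLwc(E) is a norm-closed right ideal (hence a subalgebra) of L(E). -/
theorem stmt_5 {E : Type*} [NormedAddCommGroup E] [Lattice E] [HasSolidNorm E] [IsOrderedAddMonoid E] [NormedSpace ℝ E] [CompleteSpace E] :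
    IsClosed {T : E →L[ℝ] E | IsALwc T} ∧
    (∀ T S : E →L[ℝ] E, IsALwc T → IsALwc S → IsALwc (T + S)) ∧
    (∀ (c : ℝ) (T : E →L[ℝ] E), IsALwc T → IsALwc (c • T)) ∧
    (∀ T S : E →L[ℝ] E, IsALwc T → IsALwc (T.comp S)) :=
  stmt_5_general
end

section
/- Let E, F be Banach lattices such that E* is a KB-space, F is Dedekind complete, and F* has the Schur property. Then for every order bounded operator T : E → F, the modulus |T| is almost M-weakly compact. -/
open Filter Topology

/-!
If `E*` is a KB-space, every disjoint bounded sequence `(xₙ)` in `E` is weakly null. Indeed, for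
`h ∈ E*` let `Φₙ` be the restriction of `|h|` to the band generated by `|xₙ|`. The `Φₙ` are
pairwise disjoint positive functionals whose partial sums are bounded by `|h|`; being increasing
and bounded, the partial sums converge in norm by the KB property, so `‖Φₙ‖ → 0`, while
`|h xₙ| ≤ Φₙ |xₙ| ≤ ‖Φₙ‖ ‖xₙ‖`.

Now let `fₙ → g` weakly in `F*`. The Schur property gives `‖fₙ - g‖ → 0`, so in
`fₙ (S xₙ) = (fₙ - g) (S xₙ) + (g ∘ S) xₙ` the first term tends to zero by boundedness and the
second because `(xₙ)` is weakly null.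
-/

section LatticeOrderedGroup

variable {E : Type*} [Lattice E] [AddCommGroup E] [IsOrderedAddMonoid E]

lemma add_inf_eq_zero {a b c : E} (hac : a ⊓ c = 0) (hbc : b ⊓ c = 0) : (a + b) ⊓ c = 0 := by
  have ha : 0 ≤ a := hac ▸ inf_le_left
  have hb : 0 ≤ b := hbc ▸ inf_le_left
  have hc : 0 ≤ c := hac ▸ inf_le_right
  have hle_a : (a + b) ⊓ c ≤ a := calc
    (a + b) ⊓ c ≤ (a + b) ⊓ (a + c) := inf_le_inf_left _ (le_add_of_nonneg_left ha)
    _ = a + b ⊓ c := (add_inf b c a).symm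
    _ = a := by rw [hbc, add_zero]
  refine le_antisymm ?_ (le_inf (add_nonneg ha hb) hc)
  exact hac ▸ le_inf hle_a inf_le_right

lemma nsmul_inf_eq_zero {a b : E} (hab : a ⊓ b = 0) (k : ℕ) : (k • a) ⊓ b = 0 := by
  induction k with
  | zero => simpa using (hab ▸ inf_le_right : (0 : E) ≤ b)
  | succ k ih => rw [succ_nsmul]; exact add_inf_eq_zero ih hab

lemma nsmul_inf_nsmul_eq_zero {a b : E} (hab : a ⊓ b = 0) (k l : ℕ) : (k • a) ⊓ (l • b) = 0 := by
  rw [inf_comm]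
  exact nsmul_inf_eq_zero (by rw [inf_comm, nsmul_inf_eq_zero hab]) l

lemma Finset.sum_inf_eq_zero {ι : Type*} {z : ι → E} {c : E} (hc : 0 ≤ c) (s : Finset ι)
    (hz : ∀ i ∈ s, z i ⊓ c = 0) : (∑ i ∈ s, z i) ⊓ c = 0 := by
  classical
  induction s using Finset.induction_on with
  | empty => simpa using hc
  | insert j s hj ih =>
    rw [Finset.sum_insert hj]
    exact add_inf_eq_zero (hz j (s.mem_insert_self j))
      (ih fun i hi => hz i (s.mem_insert_of_mem hi))

lemma Finset.sum_le_of_pairwise_inf_eq_zero {ι : Type*} {z : ι → E} {x : E} (hx : 0 ≤ x)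
    (hz0 : ∀ i, 0 ≤ z i) (hz : Pairwise fun i j => z i ⊓ z j = 0) (hzx : ∀ i, z i ≤ x)
    (s : Finset ι) : ∑ i ∈ s, z i ≤ x := by
  classical
  induction s using Finset.induction_on with
  | empty => simpa using hx
  | insert j s hj ih =>
    have hdisj : (∑ i ∈ s, z i) ⊓ z j = 0 :=
      Finset.sum_inf_eq_zero (hz0 j) s fun i hi => hz (ne_of_mem_of_not_mem hi hj)
    rw [Finset.sum_insert hj, add_comm, ← inf_add_sup, hdisj, zero_add]
    exact sup_le ih (hzx j)

lemma exists_abs_le_inf_abs_and_abs_sub_le {x y z : E} (hx : 0 ≤ x) (hy : 0 ≤ y)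
    (hz : |z| ≤ x + y) : ∃ z₁ : E, |z₁| ≤ x ⊓ |z| ∧ |z - z₁| ≤ y := by
  have hzx : z - x ≤ y := sub_le_iff_le_add'.2 ((le_abs_self z).trans hz)
  have hzx' : -z - x ≤ y := sub_le_iff_le_add'.2 ((neg_le_abs z).trans hz)
  have hx0 : -x ≤ |z| := (neg_nonpos.2 hx).trans (abs_nonneg z)
  refine ⟨(z ⊔ -x) ⊓ x, abs_le'.2 ⟨le_inf inf_le_right ?_, ?_⟩, abs_le'.2 ⟨?_, ?_⟩⟩
  · exact inf_le_left.trans (sup_le (le_abs_self z) hx0)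
  · rw [neg_inf, neg_sup, neg_neg]
    exact le_inf (sup_le inf_le_right (neg_le_self hx))
      (sup_le (inf_le_left.trans (neg_le_abs z)) hx0)
  · rw [sub_inf, sub_sup, sub_self]
    exact sup_le (inf_le_left.trans hy) hzx
  · rw [neg_sub, sub_eq_add_neg, inf_add, sup_add, add_neg_cancel, ← sub_eq_add_neg]
    exact inf_le_left.trans (sup_le hy (by rwa [neg_sub_comm]))

end LatticeOrderedGroup

section NormedLattice

variable {E : Type*} [NormedAddCommGroup E] [Lattice E] [HasSolidNorm E] [IsOrderedAddMonoid E]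

lemma norm_posPart_le (x : E) : ‖x⁺‖ ≤ ‖x‖ :=
  norm_le_norm_of_abs_le_abs <| by
    rw [abs_of_nonneg (posPart_nonneg x), ← posPart_add_negPart]
    exact le_add_of_nonneg_right (negPart_nonneg x)

lemma norm_negPart_le (x : E) : ‖x⁻‖ ≤ ‖x‖ :=
  norm_le_norm_of_abs_le_abs <| by
    rw [abs_of_nonneg (negPart_nonneg x), ← posPart_add_negPart]
    exact le_add_of_nonneg_left (posPart_nonneg x)

lemma abs_apply_posPart_sub_negPart_le {p : E → ℝ} {C : ℝ} (hC : 0 ≤ C)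
    (hp : ∀ x, 0 ≤ x → |p x| ≤ C * ‖x‖) (x : E) : |p x⁺ - p x⁻| ≤ 2 * C * ‖x‖ := calc
  |p x⁺ - p x⁻| ≤ |p x⁺| + |p x⁻| := abs_sub _ _
  _ ≤ C * ‖x⁺‖ + C * ‖x⁻‖ := add_le_add (hp _ (posPart_nonneg x)) (hp _ (negPart_nonneg x))
  _ ≤ C * ‖x‖ + C * ‖x‖ := by gcongr; exacts [norm_posPart_le x, norm_negPart_le x]
  _ = 2 * C * ‖x‖ := by ring

variable [NormedSpace ℝ E]

lemma ContinuousLinearMap.norm_le_two_mul_of_nonneg {Φ : E →L[ℝ] ℝ} {C : ℝ} (hC : 0 ≤ C)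
    (hΦ : ∀ x, 0 ≤ x → |Φ x| ≤ C * ‖x‖) : ‖Φ‖ ≤ 2 * C :=
  Φ.opNorm_le_bound (by positivity) fun x => by
    simpa [← map_sub, posPart_sub_negPart] using abs_apply_posPart_sub_negPart_le hC hΦ x

lemma exists_continuousLinearMap_eqOn_nonneg {p : E → ℝ}
    (hadd : ∀ x y, 0 ≤ x → 0 ≤ y → p (x + y) = p x + p y) {C : ℝ} (hC : 0 ≤ C)
    (hp : ∀ x, 0 ≤ x → |p x| ≤ C * ‖x‖) :
    ∃ Φ : E →L[ℝ] ℝ, ∀ x, 0 ≤ x → Φ x = p x := by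
  have hp0 : p 0 = 0 := by simpa using hadd 0 0 le_rfl le_rfl
  let q : E →+ ℝ := AddMonoidHom.mk' (fun x => p x⁺ - p x⁻) fun a b => by
    have key : (a + b)⁺ + (a⁻ + b⁻) = (a⁺ + b⁺) + (a + b)⁻ :=
      sub_eq_sub_iff_add_eq_add.1 <| by
        rw [posPart_sub_negPart, add_sub_add_comm, posPart_sub_negPart, posPart_sub_negPart]
    have := congrArg p key
    rw [hadd _ _ (posPart_nonneg _) (add_nonneg (negPart_nonneg a) (negPart_nonneg b)),
      hadd _ _ (negPart_nonneg a) (negPart_nonneg b),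
      hadd _ _ (add_nonneg (posPart_nonneg a) (posPart_nonneg b)) (negPart_nonneg _),
      hadd _ _ (posPart_nonneg a) (posPart_nonneg b)] at this
    linarith
  have hq : Continuous q := AddMonoidHomClass.continuous_of_bound q (2 * C) fun x =>
    abs_apply_posPart_sub_negPart_le hC hp x
  refine ⟨q.toRealLinearMap hq, fun x hx => ?_⟩
  change p x⁺ - p x⁻ = p x
  rw [posPart_eq_self.2 hx, negPart_eq_zero.2 hx, hp0, sub_zero]

end NormedLattice

section BandModulus

open Finset

variable {E : Type*} [NormedAddCommGroup E] [Lattice E] [IsOrderedAddMonoid E] [NormedSpace ℝ E]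

/-- For `0 ≤ x` this is `|h| (P_u x)`, where `P_u` is the projection onto the band generated
by `u`; the supremum over the ideal generated by `u` avoids assuming that band projections
exist. -/
noncomputable def bandModulus (h : E →L[ℝ] ℝ) (u x : E) : ℝ :=
  sSup (h '' {z | ∃ k : ℕ, |z| ≤ x ⊓ k • u})

variable {h : E →L[ℝ] ℝ} {u x y : E}

lemma bandModulus_set_nonempty (hx : 0 ≤ x) : (h '' {z | ∃ k : ℕ, |z| ≤ x ⊓ k • u}).Nonempty :=
  ⟨h 0, 0, ⟨0, by simpa using hx⟩, rfl⟩

variable [HasSolidNorm E]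

lemma bandModulus_set_le (hx : 0 ≤ x) :
    ∀ r ∈ h '' {z | ∃ k : ℕ, |z| ≤ x ⊓ k • u}, r ≤ ‖h‖ * ‖x‖ := by
  rintro _ ⟨z, ⟨k, hz⟩, rfl⟩
  have hzx : ‖z‖ ≤ ‖x‖ :=
    norm_le_norm_of_abs_le_abs (by rw [abs_of_nonneg hx]; exact hz.trans inf_le_left)
  calc h z ≤ ‖h z‖ := le_abs_self _
    _ ≤ ‖h‖ * ‖z‖ := h.le_opNorm z
    _ ≤ ‖h‖ * ‖x‖ := by gcongr

lemma le_bandModulus (hx : 0 ≤ x) {k : ℕ} {z : E} (hz : |z| ≤ x ⊓ k • u) :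
    h z ≤ bandModulus h u x :=
  le_csSup ⟨_, bandModulus_set_le hx⟩ ⟨z, ⟨k, hz⟩, rfl⟩

lemma bandModulus_nonneg (hx : 0 ≤ x) : 0 ≤ bandModulus h u x := by
  simpa using le_bandModulus (h := h) (u := u) hx (k := 0) (z := 0) (by simpa using hx)

lemma bandModulus_le (hx : 0 ≤ x) : bandModulus h u x ≤ ‖h‖ * ‖x‖ :=
  csSup_le (bandModulus_set_nonempty hx) (bandModulus_set_le hx)

lemma abs_apply_le_bandModulus_abs (z : E) : |h z| ≤ bandModulus h |z| |z| := by
  have hz : |z| ≤ |z| ⊓ (1 : ℕ) • |z| := by rw [one_nsmul, inf_idem]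
  refine abs_le.2 ⟨?_, le_bandModulus (abs_nonneg z) hz⟩
  rw [neg_le, ← map_neg]
  exact le_bandModulus (abs_nonneg z) (by rwa [abs_neg])

lemma bandModulus_add (hx : 0 ≤ x) (hy : 0 ≤ y) :
    bandModulus h u (x + y) = bandModulus h u x + bandModulus h u y := by
  refine le_antisymm ?_ ?_
  · refine csSup_le (bandModulus_set_nonempty (add_nonneg hx hy)) ?_
    rintro _ ⟨z, ⟨k, hz⟩, rfl⟩
    obtain ⟨z₁, hz₁, hz₂⟩ :=
      exists_abs_le_inf_abs_and_abs_sub_le hx hy (hz.trans inf_le_left)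
    have hzk : |z| ≤ k • u := hz.trans inf_le_right
    have hz₁k : |z₁| ≤ k • u := (hz₁.trans inf_le_right).trans hzk
    have hz₂k : |z - z₁| ≤ (k + k) • u := by
      rw [sub_eq_add_neg, add_nsmul]
      exact (abs_add_le _ _).trans (add_le_add hzk (by rwa [abs_neg]))
    calc h z = h z₁ + h (z - z₁) := by rw [← map_add, add_sub_cancel]
      _ ≤ _ := add_le_add (le_bandModulus hx (le_inf (hz₁.trans inf_le_left) hz₁k))
        (le_bandModulus hy (le_inf hz₂ hz₂k))
  · unfold bandModulus
    rw [← csSup_add (bandModulus_set_nonempty hx) ⟨_, bandModulus_set_le hx⟩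
        (bandModulus_set_nonempty hy) ⟨_, bandModulus_set_le hy⟩]
    refine csSup_le_csSup ⟨_, bandModulus_set_le (add_nonneg hx hy)⟩
      ((bandModulus_set_nonempty hx).add (bandModulus_set_nonempty hy)) ?_
    rintro _ ⟨_, ⟨v, ⟨k, hv⟩, rfl⟩, _, ⟨w, ⟨l, hw⟩, rfl⟩, rfl⟩
    refine ⟨v + w, ⟨k + l, le_inf ?_ ?_⟩, map_add h v w⟩
    · exact (abs_add_le v w).trans (add_le_add (hv.trans inf_le_left) (hw.trans inf_le_left))
    · rw [add_nsmul]
      exact (abs_add_le v w).trans (add_le_add (hv.trans inf_le_right) (hw.trans inf_le_right))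

lemma sum_bandModulus_le {ι : Type*} {u : ι → E} (hu : Pairwise fun i j => u i ⊓ u j = 0)
    (hx : 0 ≤ x) (s : Finset ι) : ∑ i ∈ s, bandModulus h (u i) x ≤ ‖h‖ * ‖x‖ := by
  refine le_of_forall_pos_le_add fun δ hδ => ?_
  have hδ' : 0 < δ / (#s + 1) := by positivity
  have happrox : ∀ i, ∃ z : E, (∃ k : ℕ, |z| ≤ x ⊓ k • u i) ∧
      bandModulus h (u i) x < h z + δ / (#s + 1) := by
    intro i
    obtain ⟨_, ⟨z, hz, rfl⟩, hlt⟩ := exists_lt_of_lt_csSup (bandModulus_set_nonempty hx)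
      (sub_lt_self (bandModulus h (u i) x) hδ')
    exact ⟨z, hz, by linarith⟩
  choose z hz hlt using happrox
  choose k hk using hz
  have hzd : Pairwise fun i j => |z i| ⊓ |z j| = 0 := fun i j hij =>
    le_antisymm ((inf_le_inf ((hk i).trans inf_le_right) ((hk j).trans inf_le_right)).trans
      (nsmul_inf_nsmul_eq_zero (hu hij) _ _).le) (le_inf (abs_nonneg _) (abs_nonneg _))
  have hsum : ∑ i ∈ s, |z i| ≤ x := Finset.sum_le_of_pairwise_inf_eq_zero hx
    (fun i => abs_nonneg _) hzd (fun i => (hk i).trans inf_le_left) s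
  have hnorm : ‖∑ i ∈ s, z i‖ ≤ ‖x‖ := norm_le_norm_of_abs_le_abs <| by
    rw [abs_of_nonneg hx]
    refine abs_le'.2 ⟨(sum_le_sum fun i _ => le_abs_self _).trans hsum, ?_⟩
    rw [← sum_neg_distrib]
    exact (sum_le_sum fun i _ => neg_le_abs _).trans hsum
  calc ∑ i ∈ s, bandModulus h (u i) x ≤ ∑ i ∈ s, (h (z i) + δ / (#s + 1)) :=
        sum_le_sum fun i _ => (hlt i).le
    _ = h (∑ i ∈ s, z i) + #s * (δ / (#s + 1)) := by
        rw [sum_add_distrib, map_sum, sum_const, nsmul_eq_mul]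
    _ ≤ ‖h‖ * ‖x‖ + δ := by
        gcongr
        · exact (le_abs_self _).trans ((h.le_opNorm _).trans (by gcongr))
        · rw [mul_div_assoc', div_le_iff₀ (by positivity)]
          nlinarith

end BandModulus

namespace DualKB

open Finset

variable {E : Type*} [NormedAddCommGroup E] [Lattice E] [HasSolidNorm E] [IsOrderedAddMonoid E]
  [NormedSpace ℝ E]

lemma tendsto_norm_zero_of_norm_partialSum_le (hE : DualKB E) {Φ : ℕ → E →L[ℝ] ℝ}
    (hΦ : ∀ n, PosFunc (Φ n)) {C : ℝ} (hC : ∀ N, ‖∑ n ∈ range N, Φ n‖ ≤ C) :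
    Tendsto (fun n => ‖Φ n‖) atTop (𝓝 0) := by
  have hpos : ∀ N, PosFunc (∑ n ∈ range N, Φ n) := fun N y hy => by
    simpa using sum_nonneg fun n _ => hΦ n y hy
  have hmono : ∀ m N, m ≤ N → DualLE (∑ n ∈ range m, Φ n) (∑ n ∈ range N, Φ n) :=
    fun m N hmN y hy => by
      simpa using sum_le_sum_of_subset_of_nonneg (range_subset_range.2 hmN)
        fun n _ _ => hΦ n y hy
  obtain ⟨g, hg⟩ := hE _ hpos hmono ⟨C, hC⟩
  have hlim := tendsto_iff_norm_sub_tendsto_zero.2 hg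
  simpa [sum_range_succ_sub_sum] using
    ((hlim.comp (tendsto_add_atTop_nat 1)).sub hlim).norm

theorem tendsto_apply_of_disjSeq (hE : DualKB E) (h : E →L[ℝ] ℝ) {x : ℕ → E}
    (hd : DisjSeq x) (hb : BddSeq x) : Tendsto (fun n => h (x n)) atTop (𝓝 0) := by
  obtain ⟨M, hM⟩ := hb
  choose Φ hΦ using fun n => exists_continuousLinearMap_eqOn_nonneg (p := bandModulus h |x n|)
    (fun _ _ => bandModulus_add) (norm_nonneg h) fun y hy => by
      rw [abs_of_nonneg (bandModulus_nonneg hy)]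
      exact bandModulus_le hy
  have hpos : ∀ n, PosFunc (Φ n) := fun n y hy => (hΦ n y hy).symm ▸ bandModulus_nonneg hy
  have hsum : ∀ N, ‖∑ n ∈ range N, Φ n‖ ≤ 2 * ‖h‖ := fun N =>
    ContinuousLinearMap.norm_le_two_mul_of_nonneg (norm_nonneg h) fun y hy => by
      have hΦy : (∑ n ∈ range N, Φ n) y = ∑ n ∈ range N, bandModulus h |x n| y := by
        simp [fun n => hΦ n y hy]
      rw [hΦy, abs_of_nonneg (sum_nonneg fun n _ => bandModulus_nonneg hy)]
      exact sum_bandModulus_le hd hy _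
  have hΦ0 := tendsto_norm_zero_of_norm_partialSum_le hE hpos hsum
  have hbound : ∀ n, |h (x n)| ≤ ‖Φ n‖ * M := fun n => calc
    |h (x n)| ≤ bandModulus h |x n| |x n| := abs_apply_le_bandModulus_abs _
    _ = Φ n |x n| := (hΦ n _ (abs_nonneg _)).symm
    _ ≤ ‖Φ n‖ * ‖|x n|‖ := (le_abs_self _).trans ((Φ n).le_opNorm _)
    _ ≤ ‖Φ n‖ * M := by rw [norm_abs_eq_norm]; gcongr; exact hM n
  exact squeeze_zero_norm hbound (by simpa using hΦ0.mul_const M)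

end DualKB

theorem stmt_7_general {E F : Type*}
    [NormedAddCommGroup E] [Lattice E] [HasSolidNorm E] [IsOrderedAddMonoid E] [NormedSpace ℝ E]
    [NormedAddCommGroup F] [NormedSpace ℝ F]
    (hE : DualKB E)
    (hSchur : ∀ f : ℕ → (F →L[ℝ] ℝ), WeakTendsto f 0 →
      Tendsto (fun n => ‖f n‖) atTop (𝓝 0))
    (S : E →L[ℝ] F) :
    IsAMwc S := by
  intro f g hfg x hxd hxb
  obtain ⟨M, hM⟩ := hxb
  have hnorm : Tendsto (fun n => ‖f n - g‖) atTop (𝓝 0) := hSchur _ fun φ => by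
    simpa using (hfg φ).sub_const (φ g)
  have hfirst : Tendsto (fun n => (f n - g) (S (x n))) atTop (𝓝 0) := by
    refine squeeze_zero_norm (fun n => ?_) (by simpa using hnorm.mul_const (‖S‖ * M))
    calc ‖(f n - g) (S (x n))‖ ≤ ‖f n - g‖ * ‖S (x n)‖ := (f n - g).le_opNorm _
      _ ≤ ‖f n - g‖ * (‖S‖ * M) := by gcongr; exact (S.le_opNorm _).trans (by gcongr; exact hM n)
  have hsecond := DualKB.tendsto_apply_of_disjSeq hE (g.comp S) hxd ⟨M, hM⟩
  simpa using hfirst.add hsecond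

/-- If E* is a KB-space, F is Dedekind complete and F* has the Schur property,
then the modulus |T| of any order bounded operator T : E → F is almost
M-weakly compact. -/
theorem stmt_7 {E F : Type*}
    [NormedAddCommGroup E] [Lattice E] [HasSolidNorm E] [IsOrderedAddMonoid E] [NormedSpace ℝ E] [CompleteSpace E]
    [NormedAddCommGroup F] [Lattice F] [HasSolidNorm F] [IsOrderedAddMonoid F] [NormedSpace ℝ F] [CompleteSpace F]
    (hE : DualKB E)
    (hDed : ∀ s : Set F, s.Nonempty → BddAbove s → ∃ a : F, IsLUB s a)
    (hSchur : ∀ f : ℕ → (F →L[ℝ] ℝ), WeakTendsto f 0 →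
      Tendsto (fun n => ‖f n‖) atTop (𝓝 0))
    (T : E →L[ℝ] F) (hT : OrderBoundedOp T)
    (S : E →L[ℝ] F)
    (hS : ∀ x : E, 0 ≤ x → IsLUB (T '' {z : E | |z| ≤ x}) (S x)) :
    IsAMwc S :=
  stmt_7_general hE hSchur S
end

section
/- Every positive almost L-weakly compact operator T : E → F between Banach lattices is order L-weakly compact: for each x ∈ E₊, the image T[0,x] of the order interval is an Lwc set. -/
open Filter Topology

/- The image of `[0, x]` lies in the solid hull of `{T x}`, and `{x}` is relatively weakly compact,
so the Lwc set `T {x}` controls every disjoint sequence in the solid hull of `T [0, x]`. -/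

lemma relWeaklyCompact_singleton {X : Type*} [NormedAddCommGroup X] [NormedSpace ℝ X] (x : X) :
    RelWeaklyCompact ({x} : Set X) := by
  rw [RelWeaklyCompact, Set.image_singleton, closure_singleton]
  exact isCompact_singleton

section SolidHull

variable {E : Type*} [NormedAddCommGroup E] [Lattice E] [HasSolidNorm E] [IsOrderedAddMonoid E]

lemma Icc_zero_subset_solidHull_singleton (y : E) : Set.Icc 0 y ⊆ SolidHull {y} := by
  rintro z ⟨hz0, hzy⟩
  exact ⟨y, rfl, abs_le_abs_of_nonneg hz0 hzy⟩

lemma solidHull_subset_solidHull {A B : Set E} (hB : B ⊆ SolidHull A) :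
    SolidHull B ⊆ SolidHull A := by
  rintro z ⟨b, hb, hzb⟩
  obtain ⟨a, ha, hba⟩ := hB hb
  exact ⟨a, ha, hzb.trans hba⟩

lemma IsLwcSet.of_subset_solidHull {A B : Set E} (hA : IsLwcSet A) (hB : B ⊆ SolidHull A) :
    IsLwcSet B := by
  obtain ⟨hbdd, hdisj⟩ := hA
  refine ⟨?_, fun x hx => hdisj x fun n => solidHull_subset_solidHull hB (hx n)⟩
  obtain ⟨r, hr⟩ := isBounded_iff_forall_norm_le.1 hbdd
  refine isBounded_iff_forall_norm_le.2 ⟨r, fun b hb => ?_⟩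
  obtain ⟨a, ha, hba⟩ := hB hb
  exact (norm_le_norm_of_abs_le_abs hba).trans (hr a ha)

end SolidHull

lemma PosOp.image_Icc_zero_subset {E F : Type*}
    [NormedAddCommGroup E] [Lattice E] [HasSolidNorm E] [IsOrderedAddMonoid E] [NormedSpace ℝ E]
    [NormedAddCommGroup F] [Lattice F] [HasSolidNorm F] [IsOrderedAddMonoid F] [NormedSpace ℝ F]
    {T : E →L[ℝ] F} (hT : PosOp T) (x : E) : T '' Set.Icc 0 x ⊆ Set.Icc 0 (T x) := by
  rintro _ ⟨a, ⟨ha0, hax⟩, rfl⟩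
  refine ⟨hT a ha0, sub_nonneg.1 ?_⟩
  simpa only [map_sub] using hT (x - a) (sub_nonneg.2 hax)

theorem stmt_16_general {E F : Type*}
    [NormedAddCommGroup E] [Lattice E] [HasSolidNorm E] [IsOrderedAddMonoid E] [NormedSpace ℝ E]
    [NormedAddCommGroup F] [Lattice F] [HasSolidNorm F] [IsOrderedAddMonoid F] [NormedSpace ℝ F]
    (T : E →L[ℝ] F) (hpos : PosOp T) (hT : IsALwc T) :
    ∀ x : E, 0 ≤ x → IsLwcSet (T '' Set.Icc (0 : E) x) := by
  intro x _
  refine (hT {x} (relWeaklyCompact_singleton x)).of_subset_solidHull ?_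
  rw [Set.image_singleton]
  exact (hpos.image_Icc_zero_subset x).trans (Icc_zero_subset_solidHull_singleton (T x))

/-- Every positive almost L-weakly compact operator T : E → F is order L-weakly
compact: the image of each order interval [0, x] is an Lwc set. -/
theorem stmt_16 {E F : Type*}
    [NormedAddCommGroup E] [Lattice E] [HasSolidNorm E] [IsOrderedAddMonoid E] [NormedSpace ℝ E] [CompleteSpace E]
    [NormedAddCommGroup F] [Lattice F] [HasSolidNorm F] [IsOrderedAddMonoid F] [NormedSpace ℝ F] [CompleteSpace F]
    (T : E →L[ℝ] F) (hpos : PosOp T) (hT : IsALwc T) :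
    ∀ x : E, 0 ≤ x → IsLwcSet (T '' Set.Icc (0 : E) x) :=
  stmt_16_general T hpos hT
end
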